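/- arXiv:1711.09455 — 10 statements merged into one kernel-verified Lean document; each statement's English description precedes it below -/
import Mathlib

section
/- Let H be a real Hilbert space and (T_n) a family of self-maps of H, each satisfying property (P₂), such that F := ⋂_n Fix(T_n) is nonempty. Let (γ_n) be a sequence of positive reals with ∑_{n=0}^∞ γ_n² = ∞, let x ∈ H, and let (x_n) be the proximal-point iteration starting at x. Assume condition (C1) holds and condition (C2) holds for (x_n). Then (x_n) converges weakly to a point of F. -/
/-!
Property (P₂) gives, for every common fixed point `q`, the Fejér inequality
`‖x (n+1) - q‖² + ‖x n - x (n+1)‖² ≤ ‖x n - q‖²`, so the iterates are bounded and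
`∑ ‖x n - x (n+1)‖² < ∞`. As `‖x n - x (n+1)‖ / γ n` is nonincreasing, its square times
`∑_{k<n} γ k²` stays bounded, hence it tends to `0`, and by (C1) so does every residual
`‖x n - T m (x n)‖`. Each `T m` is nonexpansive, so vanishing residuals put every weak cluster
point of `(x n)` into `F` (demiclosedness). Since the distances from `x n` to each point of `F` converge,
there is only one weak cluster point (Opial), and weak compactness of balls gives convergence.
-/

open Filter

/-- Property (P₂) for a self-map of a metric space. -/
def PropP2 {X : Type*} [MetricSpace X] (T : X → X) : Prop :=
  ∀ x y : X, 2 * dist (T x) (T y) ^ 2 ≤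
    dist x (T y) ^ 2 + dist y (T x) ^ 2 - dist x (T x) ^ 2 - dist y (T y) ^ 2

open Metric Topology
open scoped RealInnerProductSpace

lemma PropP2.dist_sq_add_dist_sq_le {X : Type*} [MetricSpace X] {T : X → X} (hT : PropP2 T)
    {q : X} (hq : T q = q) (z : X) :
    dist (T z) q ^ 2 + dist z (T z) ^ 2 ≤ dist z q ^ 2 := by
  have h := hT z q
  rw [hq, dist_self, dist_comm q (T z)] at h
  nlinarith [dist_nonneg (x := T z) (y := q)]

section InnerProductSpace

variable {H : Type*} [NormedAddCommGroup H] [InnerProductSpace ℝ H]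

lemma PropP2.norm_sub_sq_le_inner {T : H → H} (hT : PropP2 T) (x y : H) :
    ‖T x - T y‖ ^ 2 ≤ ⟪x - y, T x - T y⟫ := by
  have h := hT x y
  simp only [dist_eq_norm] at h
  have hx : ‖x - T y‖ ^ 2 = ‖x - T x‖ ^ 2 + 2 * ⟪x - T x, T x - T y⟫ + ‖T x - T y‖ ^ 2 := by
    rw [show x - T y = (x - T x) + (T x - T y) by abel, norm_add_sq_real]
  have hy : ‖y - T x‖ ^ 2 = ‖y - T y‖ ^ 2 - 2 * ⟪y - T y, T x - T y⟫ + ‖T x - T y‖ ^ 2 := by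
    rw [show y - T x = (y - T y) - (T x - T y) by abel, norm_sub_sq_real]
  have hxy : ⟪x - y, T x - T y⟫
      = ⟪x - T x, T x - T y⟫ - ⟪y - T y, T x - T y⟫ + ‖T x - T y‖ ^ 2 := by
    rw [show x - y = (x - T x) - (y - T y) + (T x - T y) by abel, inner_add_left,
      inner_sub_left, real_inner_self_eq_norm_sq]
  linarith

lemma PropP2.lipschitzWith_one {T : H → H} (hT : PropP2 T) : LipschitzWith 1 T := by
  refine LipschitzWith.of_dist_le_mul fun x y => ?_
  rw [NNReal.coe_one, one_mul, dist_eq_norm, dist_eq_norm]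
  have h := (hT.norm_sub_sq_le_inner x y).trans (real_inner_le_norm _ _)
  rcases (norm_nonneg (T x - T y)).eq_or_lt with h0 | h0
  · rw [← h0]; exact norm_nonneg _
  · nlinarith

/-- Both sides bound `‖z - T p‖² - ‖z - p‖²`: the left one is its expansion, the right one comes
from `‖z - T p‖ ≤ ‖z - T z‖ + ‖z - p‖`. -/
lemma LipschitzWith.two_inner_add_norm_sq_le {T : H → H} (hT : LipschitzWith 1 T) (z p : H) :
    2 * ⟪p - T p, z - p⟫ + ‖p - T p‖ ^ 2 ≤ dist z (T z) * (dist z (T z) + 2 * dist z p) := by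
  have hexp : ‖z - T p‖ ^ 2 = ‖z - p‖ ^ 2 + 2 * ⟪p - T p, z - p⟫ + ‖p - T p‖ ^ 2 := by
    rw [show z - T p = (z - p) + (p - T p) by abel, norm_add_sq_real, real_inner_comm]
  have htri : dist z (T p) ≤ dist z (T z) + dist z p := by
    have := hT.dist_le_mul z p
    rw [NNReal.coe_one, one_mul] at this
    linarith [dist_triangle z (T z) (T p)]
  rw [dist_eq_norm z (T p)] at htri
  rw [dist_eq_norm z p] at htri ⊢
  nlinarith [norm_nonneg (z - T p), dist_nonneg (x := z) (y := T z)]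

lemma continuous_inner_toWeakSpace_symm (y : H) :
    Continuous fun v : WeakSpace ℝ H => ⟪y, (toWeakSpace ℝ H).symm v⟫ :=
  WeakBilin.eval_continuous _ (innerSL ℝ y)

lemma MapClusterPt.exists_ultrafilter_tendsto_inner {ι : Type*} {l : Filter ι} {u : ι → H}
    {p : H} (hp : MapClusterPt (toWeakSpace ℝ H p) l (fun i => toWeakSpace ℝ H (u i))) :
    ∃ U : Ultrafilter ι, ↑U ≤ l ∧ ∀ y, Tendsto (fun i => ⟪y, u i⟫) U (𝓝 ⟪y, p⟫) := by
  obtain ⟨U, hUl, hU⟩ := mapClusterPt_iff_ultrafilter.1 hp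
  exact ⟨U, hUl, fun y => ((continuous_inner_toWeakSpace_symm y).tendsto _).comp hU⟩

lemma isCompact_toWeakSpace_closedBall [CompleteSpace H] (c : H) (r : ℝ) :
    IsCompact (toWeakSpace ℝ H '' closedBall c r) := by
  let e := InnerProductSpace.toDual ℝ H
  have hφ : Continuous fun f : WeakDual ℝ H =>
      toWeakSpace ℝ H (e.symm (WeakDual.toStrongDual f)) := by
    refine WeakBilin.continuous_of_continuous_eval _ fun ψ => ?_
    refine (WeakDual.eval_continuous (e.symm ψ)).congr fun f => ?_
    change WeakDual.toStrongDual f (e.symm ψ) = ψ (e.symm (WeakDual.toStrongDual f))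
    rw [← InnerProductSpace.toDual_symm_apply, ← InnerProductSpace.toDual_symm_apply,
      real_inner_comm]
  convert (WeakDual.isCompact_closedBall (e c) r).image hφ using 1
  ext w
  constructor
  · rintro ⟨z, hz, rfl⟩
    exact ⟨StrongDual.toWeakDual (e z), by simpa [e.dist_map] using hz, by simp⟩
  · rintro ⟨f, hf, rfl⟩
    refine ⟨e.symm (WeakDual.toStrongDual f), ?_, rfl⟩
    rwa [mem_closedBall, ← e.dist_map, e.apply_symm_apply]

lemma LipschitzWith.apply_eq_of_mapClusterPt {ι : Type*} {l : Filter ι} {T : H → H}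
    (hT : LipschitzWith 1 T) {u : ι → H} {p : H} {C : ℝ} (hu : ∀ i, dist (u i) p ≤ C)
    (hres : Tendsto (fun i => dist (u i) (T (u i))) l (𝓝 0))
    (hp : MapClusterPt (toWeakSpace ℝ H p) l (fun i => toWeakSpace ℝ H (u i))) :
    T p = p := by
  obtain ⟨U, hUl, hU⟩ := hp.exists_ultrafilter_tendsto_inner
  set v := p - T p
  have hlhs : Tendsto (fun i => 2 * ⟪v, u i - p⟫ + ‖v‖ ^ 2) U (𝓝 (‖v‖ ^ 2)) := by
    have h := (((hU v).sub_const ⟪v, p⟫).const_mul 2).add_const (‖v‖ ^ 2)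
    simpa [inner_sub_right] using h
  have hres' := hres.mono_left hUl
  have hrhs : Tendsto (fun i => dist (u i) (T (u i)) * (dist (u i) (T (u i)) + 2 * C)) U
      (𝓝 0) := by
    simpa using hres'.mul (hres'.add_const (2 * C))
  have hv : ‖v‖ ^ 2 ≤ 0 := le_of_tendsto_of_tendsto hlhs hrhs <| Eventually.of_forall fun i =>
    (hT.two_inner_add_norm_sq_le (u i) p).trans <|
      mul_le_mul_of_nonneg_left (by linarith [hu i]) dist_nonneg
  have : v = 0 := by simpa using hv
  exact (sub_eq_zero.1 this).symm

/-- `⟪p - p', u i⟫` is a combination of the two distances, so its limit is both `⟪p - p', p⟫`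
and `⟪p - p', p'⟫`. -/
lemma eq_of_mapClusterPt_of_tendsto_dist {ι : Type*} {l : Filter ι} {u : ι → H} {p p' : H}
    {a a' : ℝ} (ha : Tendsto (fun i => dist (u i) p) l (𝓝 a))
    (ha' : Tendsto (fun i => dist (u i) p') l (𝓝 a'))
    (hp : MapClusterPt (toWeakSpace ℝ H p) l (fun i => toWeakSpace ℝ H (u i)))
    (hp' : MapClusterPt (toWeakSpace ℝ H p') l (fun i => toWeakSpace ℝ H (u i))) :
    p = p' := by
  set b := (a' ^ 2 - a ^ 2 - ‖p'‖ ^ 2 + ‖p‖ ^ 2) / 2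
  have hinner : Tendsto (fun i => ⟪p - p', u i⟫) l (𝓝 b) := by
    refine (((((ha'.pow 2).sub (ha.pow 2)).sub_const _).add_const _).div_const 2).congr
      fun i => ?_
    rw [dist_eq_norm, dist_eq_norm, norm_sub_sq_real, norm_sub_sq_real, inner_sub_left,
      real_inner_comm p, real_inner_comm p']
    ring
  have hlim : ∀ {q : H}, MapClusterPt (toWeakSpace ℝ H q) l (fun i => toWeakSpace ℝ H (u i)) →
      ⟪p - p', q⟫ = b := fun hq => by
    obtain ⟨U, hUl, hU⟩ := hq.exists_ultrafilter_tendsto_inner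
    exact tendsto_nhds_unique (hU (p - p')) (hinner.mono_left hUl)
  have h0 : ⟪p - p', p - p'⟫ = 0 := by rw [inner_sub_right, hlim hp, hlim hp', sub_self]
  exact sub_eq_zero.1 (inner_self_eq_zero.1 h0)

/-- Opial's lemma. -/
theorem exists_mem_tendsto_toWeakSpace_of_mapClusterPt_mem [CompleteSpace H] {ι : Type*}
    {l : Filter ι} [l.NeBot] {F : Set H} {u : ι → H} {c : H} {r : ℝ}
    (hu : ∀ i, dist (u i) c ≤ r)
    (hdist : ∀ q ∈ F, ∃ a, Tendsto (fun i => dist (u i) q) l (𝓝 a))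
    (hclus : ∀ p, MapClusterPt (toWeakSpace ℝ H p) l (fun i => toWeakSpace ℝ H (u i)) → p ∈ F) :
    ∃ p ∈ F, Tendsto (fun i => toWeakSpace ℝ H (u i)) l (𝓝 (toWeakSpace ℝ H p)) := by
  have hK := isCompact_toWeakSpace_closedBall c r
  have hmem : ∀ᶠ i in l, toWeakSpace ℝ H (u i) ∈ toWeakSpace ℝ H '' closedBall c r :=
    Eventually.of_forall fun i => Set.mem_image_of_mem _ (hu i)
  obtain ⟨_, ⟨p, -, rfl⟩, hp⟩ := hK.exists_mapClusterPt (le_principal_iff.2 hmem)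
  have hpF := hclus p hp
  refine ⟨p, hpF, hK.tendsto_nhds_of_unique_mapClusterPt hmem ?_⟩
  rintro _ ⟨p', -, rfl⟩ hp'
  obtain ⟨a, ha⟩ := hdist p hpF
  obtain ⟨a', ha'⟩ := hdist p' (hclus p' hp')
  rw [eq_of_mapClusterPt_of_tendsto_dist ha' ha hp' hp]

end InnerProductSpace

lemma Real.tendsto_zero_of_tendsto_sq {ι : Type*} {l : Filter ι} {f : ι → ℝ} (hf : ∀ i, 0 ≤ f i)
    (h : Tendsto (fun i => f i ^ 2) l (𝓝 0)) : Tendsto f l (𝓝 0) := by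
  simpa [Real.sqrt_sq (hf _)] using h.sqrt

lemma tendsto_zero_of_antitone_of_sum_sq_mul_le {c γ : ℕ → ℝ} {B : ℝ} (hc : Antitone c)
    (hc0 : ∀ n, 0 ≤ c n) (hsum : ∀ N, ∑ n ∈ Finset.range N, (γ n * c n) ^ 2 ≤ B)
    (hdiv : Tendsto (fun N => ∑ n ∈ Finset.range N, γ n ^ 2) atTop atTop) :
    Tendsto c atTop (𝓝 0) := by
  have hbound : ∀ N, c N ^ 2 * ∑ n ∈ Finset.range N, γ n ^ 2 ≤ B := fun N => by
    refine le_trans ?_ (hsum N)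
    rw [Finset.mul_sum]
    refine Finset.sum_le_sum fun n hn => ?_
    have : c N ^ 2 ≤ c n ^ 2 :=
      pow_le_pow_left₀ (hc0 N) (hc (Finset.mem_range.1 hn).le) 2
    nlinarith [sq_nonneg (γ n)]
  refine Real.tendsto_zero_of_tendsto_sq hc0 <|
    squeeze_zero' (Eventually.of_forall fun N => sq_nonneg _) ?_ (hdiv.const_div_atTop B)
  filter_upwards [hdiv.eventually_gt_atTop 0] with N hN
  rw [le_div_iff₀ hN]
  exact hbound N

lemma dist_apply_le_of_dist_le_abs_sub_div_mul {X : Type*} [MetricSpace X] {S T : X → X} {w : X}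
    {a b : ℝ} (ha : 0 < a) (hb : 0 < b) (h : dist (T w) (S w) ≤ |a - b| / a * dist w (T w)) :
    dist w (S w) ≤ 2 * dist w (T w) + b * (dist w (T w) / a) := by
  have hab : |a - b| / a ≤ 1 + b / a := by
    rw [div_le_iff₀ ha, add_mul, one_mul, div_mul_cancel₀ _ ha.ne']
    exact (abs_sub _ _).trans_eq (by rw [abs_of_pos ha, abs_of_pos hb])
  calc dist w (S w) ≤ dist w (T w) + dist (T w) (S w) := dist_triangle _ _ _
    _ ≤ dist w (T w) + (1 + b / a) * dist w (T w) := by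
      gcongr
      exact h.trans (mul_le_mul_of_nonneg_right hab dist_nonneg)
    _ = 2 * dist w (T w) + b * (dist w (T w) / a) := by ring

section ProximalPoint

variable {X : Type*} [MetricSpace X] {T : ℕ → X → X} {x : ℕ → X} {q : X}

lemma dist_succ_sq_add_dist_sq_le (hT : ∀ n, PropP2 (T n)) (hx : ∀ n, x (n + 1) = T n (x n))
    (hq : ∀ n, T n q = q) (n : ℕ) :
    dist (x (n + 1)) q ^ 2 + dist (x n) (x (n + 1)) ^ 2 ≤ dist (x n) q ^ 2 := by
  rw [hx n]
  exact (hT n).dist_sq_add_dist_sq_le (hq n) (x n)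

lemma antitone_dist_of_forall_apply_eq (hT : ∀ n, PropP2 (T n))
    (hx : ∀ n, x (n + 1) = T n (x n)) (hq : ∀ n, T n q = q) :
    Antitone fun n => dist (x n) q := by
  refine antitone_nat_of_succ_le fun n => ?_
  have := dist_succ_sq_add_dist_sq_le hT hx hq n
  exact (pow_le_pow_iff_left₀ dist_nonneg dist_nonneg two_ne_zero).1
    (by nlinarith [sq_nonneg (dist (x n) (x (n + 1)))])

lemma sum_range_dist_succ_sq_le (hT : ∀ n, PropP2 (T n)) (hx : ∀ n, x (n + 1) = T n (x n))
    (hq : ∀ n, T n q = q) (N : ℕ) :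
    ∑ n ∈ Finset.range N, dist (x n) (x (n + 1)) ^ 2 ≤ dist (x 0) q ^ 2 := by
  suffices ∑ n ∈ Finset.range N, dist (x n) (x (n + 1)) ^ 2 ≤
      dist (x 0) q ^ 2 - dist (x N) q ^ 2 by nlinarith [sq_nonneg (dist (x N) q)]
  induction N with
  | zero => simp
  | succ N ih =>
    rw [Finset.sum_range_succ]
    linarith [dist_succ_sq_add_dist_sq_le hT hx hq N]

end ProximalPoint

theorem stmt0_general
    {H : Type*} [NormedAddCommGroup H] [InnerProductSpace ℝ H] [CompleteSpace H]
    (T : ℕ → H → H) (hP2 : ∀ n, PropP2 (T n))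
    (hF : ∃ q : H, ∀ n, T n q = q)
    (γ : ℕ → ℝ) (hγ : ∀ n, 0 < γ n)
    (hdiv : Tendsto (fun N => ∑ n ∈ Finset.range N, γ n ^ 2) atTop atTop)
    (x : ℕ → H) (hx : ∀ n, x (n + 1) = T n (x n))
    (hC1 : ∀ n m : ℕ, ∀ w : H,
      dist (T n w) (T m w) ≤ (|γ n - γ m| / γ n) * dist w (T n w))
    (hC2 : ∀ n : ℕ,
      dist (x (n + 1)) (x (n + 2)) / γ (n + 1) ≤ dist (x n) (x (n + 1)) / γ n) :
    ∃ p : H, (∀ n, T n p = p) ∧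
      Tendsto (fun n => toWeakSpace ℝ H (x n)) atTop (nhds (toWeakSpace ℝ H p)) := by
  obtain ⟨q, hq⟩ := hF
  set D := fun n => dist (x n) (x (n + 1))
  have hsum := sum_range_dist_succ_sq_le hP2 hx hq
  have hD : Tendsto D atTop (𝓝 0) :=
    Real.tendsto_zero_of_tendsto_sq (fun _ => dist_nonneg)
      (summable_of_sum_range_le (fun _ => sq_nonneg _) hsum).tendsto_atTop_zero
  have hDγ : Tendsto (fun n => D n / γ n) atTop (𝓝 0) := by
    refine tendsto_zero_of_antitone_of_sum_sq_mul_le (B := dist (x 0) q ^ 2)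
      (antitone_nat_of_succ_le hC2) (fun n => div_nonneg dist_nonneg (hγ n).le) (fun N => ?_) hdiv
    simpa only [mul_div_cancel₀ _ (hγ _).ne'] using hsum N
  have hres : ∀ m, Tendsto (fun n => dist (x n) (T m (x n))) atTop (𝓝 0) := fun m => by
    refine squeeze_zero (fun _ => dist_nonneg) (fun n => ?_)
      (by simpa using (hD.const_mul 2).add (hDγ.const_mul (γ m)))
    have h := dist_apply_le_of_dist_le_abs_sub_div_mul (hγ n) (hγ m) (hC1 n m (x n))
    rwa [← hx n] at h
  have hanti := fun q (hq : ∀ n, T n q = q) => antitone_dist_of_forall_apply_eq hP2 hx hq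
  exact exists_mem_tendsto_toWeakSpace_of_mapClusterPt_mem (fun n => hanti q hq n.zero_le)
    (fun q hq => ⟨_, tendsto_atTop_ciInf (hanti q hq)
      ⟨0, by rintro _ ⟨n, rfl⟩; exact dist_nonneg⟩⟩)
    (fun p hp m => (hP2 m).lipschitzWith_one.apply_eq_of_mapClusterPt
      (fun n => (dist_triangle _ q _).trans (add_le_add_left (hanti q hq n.zero_le) _))
      (hres m) hp)

theorem stmt0
    {H : Type*} [NormedAddCommGroup H] [InnerProductSpace ℝ H] [CompleteSpace H]
    (T : ℕ → H → H) (hP2 : ∀ n, PropP2 (T n))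
    (hF : ∃ q : H, ∀ n, T n q = q)
    (γ : ℕ → ℝ) (hγ : ∀ n, 0 < γ n)
    (hdiv : Tendsto (fun N => ∑ n ∈ Finset.range N, γ n ^ 2) atTop atTop)
    (x₀ : H) (x : ℕ → H) (hx0 : x 0 = x₀) (hx : ∀ n, x (n + 1) = T n (x n))
    (hC1 : ∀ n m : ℕ, ∀ w : H,
      dist (T n w) (T m w) ≤ (|γ n - γ m| / γ n) * dist w (T n w))
    (hC2 : ∀ n : ℕ,
      dist (x (n + 1)) (x (n + 2)) / γ (n + 1) ≤ dist (x n) (x (n + 1)) / γ n) :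
    ∃ p : H, (∀ n, T n p = p) ∧
      Tendsto (fun n => toWeakSpace ℝ H (x n)) atTop (nhds (toWeakSpace ℝ H p)) :=
  stmt0_general T hP2 hF γ hγ hdiv x hx hC1 hC2
end

section
/- Let H be a real Hilbert space, (γ_n) a sequence of positive reals with ∑_{n=0}^∞ γ_n² = ∞, and (T_n) a family of self-maps of H that is jointly firmly nonexpansive with respect to (γ_n) and satisfies F := ⋂_n Fix(T_n) ≠ ∅. Let x ∈ H and let (x_n) be the proximal-point iteration starting at x. Then (x_n) converges weakly to a point of F. -/
/-!
Joint firm nonexpansivity, with the convex weights pushed towards `1`, yields the monotonicity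
inequality `0 ≤ ⟪T n a - T m b, A n a - A m b⟫` for `A n a = (γ n)⁻¹ • (a - T n a)`.
Against a common fixed point it makes the iteration Fejér monotone with square-summable steps
`x n - x (n + 1) = γ n • A n (x n)`; against consecutive iterates it makes the norm of the
velocity `A n (x n) = (γ n)⁻¹ • (x n - x (n + 1))` nonincreasing, so
`‖A N (x N)‖² ∑_{n ≤ N} γ n² ≤ ‖x 0 - q‖²` and `A n (x n) → 0`.
Passing to the limit in the monotonicity inequality, every weak cluster point of the iteration
is a common fixed point, and Opial's argument (Fejér monotonicity together with weak
compactness of bounded sets) turns this into weak convergence.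
-/

open Filter

def JointlyFirmlyNonexpansive {H : Type*} [NormedAddCommGroup H] [InnerProductSpace ℝ H]
    (T : ℕ → H → H) (γ : ℕ → ℝ) : Prop :=
  ∀ n m : ℕ, ∀ x y : H, ∀ α β : ℝ, α ∈ Set.Icc (0 : ℝ) 1 → β ∈ Set.Icc (0 : ℝ) 1 →
    (1 - α) * γ n = (1 - β) * γ m →
    ‖T n x - T m y‖ ≤ ‖((1 - α) • x + α • T n x) - ((1 - β) • y + β • T m y)‖

open Topology
open scoped RealInnerProductSpace

section InnerProductSpace

variable {E : Type*} [NormedAddCommGroup E] [InnerProductSpace ℝ E]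

theorem inner_nonneg_of_norm_le_norm_add_smul {u w : E} {ε : ℝ} (hε : 0 < ε)
    (h : ∀ c ∈ Set.Ioc 0 ε, ‖u‖ ≤ ‖u + c • w‖) : 0 ≤ ⟪u, w⟫ := by
  have hpos : ∀ c ∈ Set.Ioc 0 ε, 0 ≤ 2 * ⟪u, w⟫ + c * ‖w‖ ^ 2 := fun c hc => by
    have hsq := pow_le_pow_left₀ (norm_nonneg _) (h c hc) 2
    rw [norm_add_sq_real, real_inner_smul_right, norm_smul, Real.norm_eq_abs, abs_of_pos hc.1,
      mul_pow] at hsq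
    refine (mul_nonneg_iff_of_pos_left hc.1).1 ?_
    nlinarith
  have hlim : Tendsto (fun c : ℝ => 2 * ⟪u, w⟫ + c * ‖w‖ ^ 2) (𝓝[>] 0) (𝓝 (2 * ⟪u, w⟫)) := by
    have : Continuous fun c : ℝ => 2 * ⟪u, w⟫ + c * ‖w‖ ^ 2 := by fun_prop
    simpa using (this.tendsto 0).mono_left nhdsWithin_le_nhds
  linarith [ge_of_tendsto hlim (eventually_of_mem (Ioc_mem_nhdsGT hε) hpos)]

end InnerProductSpace

section WeakTopology

variable {H : Type*} [NormedAddCommGroup H] [InnerProductSpace ℝ H] {ι : Type*}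

theorem tendsto_inner_of_tendsto_toWeakSpace {l : Filter ι} {f : ι → H} {p : H}
    (h : Tendsto (fun i => toWeakSpace ℝ H (f i)) l (𝓝 (toWeakSpace ℝ H p))) (z : H) :
    Tendsto (fun i => ⟪f i, z⟫) l (𝓝 ⟪p, z⟫) := by
  have h' : Tendsto (fun i => ⟪z, f i⟫) l (𝓝 ⟪z, p⟫) :=
    ((WeakBilin.eval_continuous _ (innerSL ℝ z)).tendsto _).comp h
  simpa only [real_inner_comm z] using h'

theorem eq_of_tendsto_toWeakSpace_of_tendsto_norm_sub {l l₁ l₂ : Filter ι} [l₁.NeBot] [l₂.NeBot]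
    (h₁ : l₁ ≤ l) (h₂ : l₂ ≤ l) {f : ι → H} {p p' : H} {a b : ℝ}
    (ha : Tendsto (fun i => ‖f i - p‖) l (𝓝 a)) (hb : Tendsto (fun i => ‖f i - p'‖) l (𝓝 b))
    (hp : Tendsto (fun i => toWeakSpace ℝ H (f i)) l₁ (𝓝 (toWeakSpace ℝ H p)))
    (hp' : Tendsto (fun i => toWeakSpace ℝ H (f i)) l₂ (𝓝 (toWeakSpace ℝ H p'))) :
    p = p' := by
  set L := (‖p‖ ^ 2 - ‖p'‖ ^ 2 - (a ^ 2 - b ^ 2)) / 2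
  -- polarization: the inner product against `p - p'` is determined by the two distances
  have hL : Tendsto (fun i => ⟪f i, p - p'⟫) l (𝓝 L) := by
    refine (((tendsto_const_nhds (x := ‖p‖ ^ 2 - ‖p'‖ ^ 2)).sub
      ((ha.pow 2).sub (hb.pow 2))).div_const 2).congr fun i => ?_
    rw [inner_sub_right, norm_sub_sq_real, norm_sub_sq_real]
    ring
  have hpL : ⟪p, p - p'⟫ = L :=
    tendsto_nhds_unique (tendsto_inner_of_tendsto_toWeakSpace hp _) (hL.mono_left h₁)
  have hp'L : ⟪p', p - p'⟫ = L :=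
    tendsto_nhds_unique (tendsto_inner_of_tendsto_toWeakSpace hp' _) (hL.mono_left h₂)
  rw [← sub_eq_zero, ← inner_self_eq_zero (𝕜 := ℝ), inner_sub_left, hpL, hp'L, sub_self]

variable [CompleteSpace H]

theorem tendsto_toWeakSpace_iff {l : Filter ι} {f : ι → H} {p : H} :
    Tendsto (fun i => toWeakSpace ℝ H (f i)) l (𝓝 (toWeakSpace ℝ H p)) ↔
      ∀ z, Tendsto (fun i => ⟪f i, z⟫) l (𝓝 ⟪p, z⟫) := by
  refine ⟨tendsto_inner_of_tendsto_toWeakSpace, fun h => ?_⟩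
  have hsep : Function.Injective (topDualPairing ℝ H).flip := fun a b hab => by
    have h := congr($hab (InnerProductSpace.toDual ℝ H (a - b)))
    simp only [LinearMap.flip_apply, topDualPairing_apply,
      InnerProductSpace.toDual_apply_apply] at h
    rw [← sub_eq_zero, ← inner_self_eq_zero (𝕜 := ℝ), inner_sub_right, h, sub_self]
  refine (WeakBilin.tendsto_iff_forall_eval_tendsto _ hsep).2 fun φ => ?_
  show Tendsto (fun i => φ (f i)) l (𝓝 (φ p))
  simpa only [real_inner_comm ((InnerProductSpace.toDual ℝ H).symm φ),
    InnerProductSpace.toDual_symm_apply] using h ((InnerProductSpace.toDual ℝ H).symm φ)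

theorem exists_tendsto_toWeakSpace_of_norm_le (U : Ultrafilter ι) {f : ι → H} {C : ℝ}
    (hf : ∀ i, ‖f i‖ ≤ C) :
    ∃ p, Tendsto (fun i => toWeakSpace ℝ H (f i)) U (𝓝 (toWeakSpace ℝ H p)) := by
  let D := InnerProductSpace.toDual ℝ H
  -- Banach–Alaoglu in the dual, transported back through the Riesz isometry `D`
  obtain ⟨g, -, hg⟩ := (WeakDual.isCompact_closedBall (0 : StrongDual ℝ H) C).ultrafilter_le_nhds
    (U.map fun i => StrongDual.toWeakDual (D (f i))) (by
      rw [Ultrafilter.coe_map, le_principal_iff, mem_map]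
      exact univ_mem' fun i => by simpa [D] using hf i)
  refine ⟨D.symm (WeakDual.toStrongDual g), tendsto_toWeakSpace_iff.2 fun z => ?_⟩
  simpa [D, real_inner_comm, Function.comp_def]
    using ((WeakDual.eval_continuous z).tendsto g).comp hg

theorem exists_tendsto_toWeakSpace_of_antitone_norm_sub {x : ℕ → H} {F : Set H}
    (hF : F.Nonempty) (hfejer : ∀ p ∈ F, Antitone fun n => ‖x n - p‖)
    (hcluster : ∀ U : Ultrafilter ℕ, (U : Filter ℕ) ≤ atTop → ∀ p,
      Tendsto (fun n => toWeakSpace ℝ H (x n)) U (𝓝 (toWeakSpace ℝ H p)) → p ∈ F) :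
    ∃ p ∈ F, Tendsto (fun n => toWeakSpace ℝ H (x n)) atTop (𝓝 (toWeakSpace ℝ H p)) := by
  obtain ⟨q, hq⟩ := hF
  have hbdd : ∀ n, ‖x n‖ ≤ ‖q‖ + ‖x 0 - q‖ := fun n =>
    (norm_le_norm_add_norm_sub' (x n) q).trans (by gcongr; exact hfejer q hq n.zero_le)
  have hlim : ∀ U : Ultrafilter ℕ, (U : Filter ℕ) ≤ atTop → ∃ p ∈ F,
      Tendsto (fun n => toWeakSpace ℝ H (x n)) U (𝓝 (toWeakSpace ℝ H p)) := fun U hU => by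
    obtain ⟨p, hp⟩ := exists_tendsto_toWeakSpace_of_norm_le U hbdd
    exact ⟨p, hcluster U hU p hp, hp⟩
  have hdist : ∀ p ∈ F, Tendsto (fun n => ‖x n - p‖) atTop (𝓝 (⨅ n, ‖x n - p‖)) := fun p hp =>
    tendsto_atTop_ciInf (hfejer p hp) ⟨0, Set.forall_mem_range.2 fun n => norm_nonneg _⟩
  obtain ⟨p, hpF, hp⟩ := hlim (Ultrafilter.of atTop) (Ultrafilter.of_le _)
  refine ⟨p, hpF, (tendsto_iff_ultrafilter _ _ _).2 fun U hU => ?_⟩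
  obtain ⟨p', hp'F, hp'⟩ := hlim U hU
  rwa [eq_of_tendsto_toWeakSpace_of_tendsto_norm_sub hU (Ultrafilter.of_le atTop)
    (hdist p' hp'F) (hdist p hpF) hp' hp] at hp'

end WeakTopology

namespace JointlyFirmlyNonexpansive

variable {H : Type*} [NormedAddCommGroup H] [InnerProductSpace ℝ H]
  {T : ℕ → H → H} {γ : ℕ → ℝ} {x : ℕ → H}

theorem inner_nonneg (hT : JointlyFirmlyNonexpansive T γ) (hγ : ∀ n, 0 < γ n) (n m : ℕ)
    (a b : H) :
    0 ≤ ⟪T n a - T m b, (γ n)⁻¹ • (a - T n a) - (γ m)⁻¹ • (b - T m b)⟫ := by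
  refine inner_nonneg_of_norm_le_norm_add_smul (lt_min (hγ n) (hγ m)) fun c ⟨hc0, hc⟩ => ?_
  have hγn := hγ n
  have hγm := hγ m
  have hα : 1 - c / γ n ∈ Set.Icc (0 : ℝ) 1 :=
    ⟨sub_nonneg.2 ((div_le_one hγn).2 (hc.trans (min_le_left _ _))),
      by linarith [div_pos hc0 hγn]⟩
  have hβ : 1 - c / γ m ∈ Set.Icc (0 : ℝ) 1 :=
    ⟨sub_nonneg.2 ((div_le_one hγm).2 (hc.trans (min_le_right _ _))),
      by linarith [div_pos hc0 hγm]⟩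
  convert hT n m a b _ _ hα hβ (by field_simp; ring) using 2
  match_scalars <;> field_simp <;> ring

theorem norm_sub_sq_add_norm_sub_sq_le (hT : JointlyFirmlyNonexpansive T γ)
    (hγ : ∀ n, 0 < γ n) {n : ℕ} {r : H} (hr : T n r = r) (a : H) :
    ‖T n a - r‖ ^ 2 + ‖T n a - a‖ ^ 2 ≤ ‖a - r‖ ^ 2 := by
  have h := hT.inner_nonneg hγ n n a r
  rw [hr, sub_self, smul_zero, sub_zero, real_inner_smul_right] at h
  have hinner : 0 ≤ ⟪T n a - r, a - T n a⟫ := nonneg_of_mul_nonneg_right h (inv_pos.2 (hγ n))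
  have hsplit : a - r = (T n a - r) + (a - T n a) := by abel
  rw [hsplit, norm_add_sq_real, norm_sub_rev (T n a) a]
  linarith

theorem antitone_norm_sub (hT : JointlyFirmlyNonexpansive T γ) (hγ : ∀ n, 0 < γ n)
    (hx : ∀ n, x (n + 1) = T n (x n)) {r : H} (hr : ∀ n, T n r = r) :
    Antitone fun n => ‖x n - r‖ := by
  refine antitone_nat_of_succ_le fun n => ?_
  have h := hT.norm_sub_sq_add_norm_sub_sq_le hγ (hr n) (x n)
  rw [← hx] at h
  exact (pow_le_pow_iff_left₀ (norm_nonneg _) (norm_nonneg _) two_ne_zero).1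
    (le_of_add_le_of_nonneg_left h (sq_nonneg _))

theorem sum_norm_sub_sq_le (hT : JointlyFirmlyNonexpansive T γ) (hγ : ∀ n, 0 < γ n)
    (hx : ∀ n, x (n + 1) = T n (x n)) {q : H} (hq : ∀ n, T n q = q) (N : ℕ) :
    ∑ k ∈ Finset.range N, ‖x (k + 1) - x k‖ ^ 2 ≤ ‖x 0 - q‖ ^ 2 := by
  suffices h : ∀ N, ∑ k ∈ Finset.range N, ‖x (k + 1) - x k‖ ^ 2 + ‖x N - q‖ ^ 2 ≤ ‖x 0 - q‖ ^ 2 by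
    linarith [h N, sq_nonneg ‖x N - q‖]
  intro N
  induction N with
  | zero => simp
  | succ N ih =>
    have hstep := hT.norm_sub_sq_add_norm_sub_sq_le hγ (hq N) (x N)
    rw [← hx] at hstep
    rw [Finset.sum_range_succ]
    linarith

theorem antitone_norm_velocity (hT : JointlyFirmlyNonexpansive T γ) (hγ : ∀ n, 0 < γ n)
    (hx : ∀ n, x (n + 1) = T n (x n)) :
    Antitone fun n => ‖(γ n)⁻¹ • (x n - x (n + 1))‖ := by
  refine antitone_nat_of_succ_le fun n => ?_
  set v := (γ n)⁻¹ • (x n - x (n + 1))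
  set w := (γ (n + 1))⁻¹ • (x (n + 1) - x (n + 2))
  have h := hT.inner_nonneg hγ (n + 1) n (x (n + 1)) (x n)
  rw [← hx, ← hx] at h
  have hdiff : x (n + 2) - x (n + 1) = -γ (n + 1) • w := by
    rw [smul_smul, neg_mul, mul_inv_cancel₀ (hγ (n + 1)).ne', neg_one_smul, neg_sub]
  rw [hdiff, real_inner_smul_left, inner_sub_right, real_inner_self_eq_norm_sq] at h
  have hw : ‖w‖ ^ 2 ≤ ⟪w, v⟫ := by nlinarith [hγ (n + 1)]
  nlinarith [real_inner_le_norm w v, norm_nonneg w, norm_nonneg v]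

theorem tendsto_velocity_zero (hT : JointlyFirmlyNonexpansive T γ) (hγ : ∀ n, 0 < γ n)
    (hdiv : Tendsto (fun N => ∑ n ∈ Finset.range N, γ n ^ 2) atTop atTop)
    (hx : ∀ n, x (n + 1) = T n (x n)) {q : H} (hq : ∀ n, T n q = q) :
    Tendsto (fun n => (γ n)⁻¹ • (x n - x (n + 1))) atTop (𝓝 0) := by
  set y := fun n => (γ n)⁻¹ • (x n - x (n + 1))
  have hy : ∀ k, γ k ^ 2 * ‖y k‖ ^ 2 = ‖x (k + 1) - x k‖ ^ 2 := fun k => by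
    rw [norm_smul, norm_inv, Real.norm_of_nonneg (hγ k).le, norm_sub_rev, mul_pow,
      ← mul_assoc, ← mul_pow, mul_inv_cancel₀ (hγ k).ne', one_pow, one_mul]
  have hbound : ∀ N, (∑ k ∈ Finset.range (N + 1), γ k ^ 2) * ‖y N‖ ^ 2 ≤ ‖x 0 - q‖ ^ 2 :=
    fun N => calc
      _ ≤ ∑ k ∈ Finset.range (N + 1), γ k ^ 2 * ‖y k‖ ^ 2 := by
        rw [Finset.sum_mul]
        refine Finset.sum_le_sum fun k hk => ?_
        have hyk : ‖y N‖ ≤ ‖y k‖ :=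
          hT.antitone_norm_velocity hγ hx (Finset.mem_range_succ_iff.1 hk)
        gcongr
      _ ≤ ‖x 0 - q‖ ^ 2 := by
        simp only [hy]
        exact hT.sum_norm_sub_sq_le hγ hx hq (N + 1)
  have hS : ∀ N, 0 < ∑ k ∈ Finset.range (N + 1), γ k ^ 2 := fun N =>
    Finset.sum_pos (fun k _ => pow_pos (hγ k) 2) Finset.nonempty_range_add_one
  have hsq : Tendsto (fun N => ‖y N‖ ^ 2) atTop (𝓝 0) := by
    refine squeeze_zero (fun N => sq_nonneg _) (fun N => ?_)
      ((tendsto_const_nhds (x := ‖x 0 - q‖ ^ 2)).div_atTop (hdiv.comp (tendsto_add_atTop_nat 1)))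
    rw [Function.comp_apply, le_div_iff₀ (hS N), mul_comm]
    exact hbound N
  rw [tendsto_zero_iff_norm_tendsto_zero]
  simpa [Real.sqrt_sq (norm_nonneg _)] using hsq.sqrt

theorem apply_eq_of_tendsto_toWeakSpace (hT : JointlyFirmlyNonexpansive T γ)
    (hγ : ∀ n, 0 < γ n) (hx : ∀ n, x (n + 1) = T n (x n)) {C : ℝ} (hbdd : ∀ n, ‖x n‖ ≤ C)
    (hvel : Tendsto (fun n => (γ n)⁻¹ • (x n - x (n + 1))) atTop (𝓝 0))
    {l : Filter ℕ} [l.NeBot] (hl : l ≤ atTop) {p : H}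
    (hp : Tendsto (fun n => toWeakSpace ℝ H (x (n + 1))) l (𝓝 (toWeakSpace ℝ H p))) (m : ℕ) :
    T m p = p := by
  set u := (γ m)⁻¹ • (p - T m p)
  set y := fun n => (γ n)⁻¹ • (x n - x (n + 1))
  have hmono : ∀ n, 0 ≤ ⟪T m p - x (n + 1), u - y n⟫ := fun n => by
    have h := hT.inner_nonneg hγ m n p (x n)
    rw [← hx n] at h
    exact h
  have hsmall : Tendsto (fun n => ⟪T m p - x (n + 1), y n⟫) atTop (𝓝 0) := by
    refine squeeze_zero_norm (fun n => (abs_real_inner_le_norm _ _).trans ?_)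
      (by simpa using (tendsto_zero_iff_norm_tendsto_zero.1 hvel).const_mul (‖T m p‖ + C))
    gcongr
    exact (norm_sub_le _ _).trans (by gcongr; exact hbdd (n + 1))
  have hlim : Tendsto (fun n => ⟪T m p - x (n + 1), u - y n⟫) l (𝓝 ⟪T m p - p, u⟫) := by
    have h := ((tendsto_const_nhds (x := ⟪T m p, u⟫)).sub
      (tendsto_inner_of_tendsto_toWeakSpace hp u)).sub (hsmall.mono_left hl)
    rw [sub_zero, ← inner_sub_left] at h
    exact h.congr fun n => by simp only [inner_sub_left, inner_sub_right]
  have hval : ⟪T m p - p, u⟫ = -((γ m)⁻¹ * ‖T m p - p‖ ^ 2) := by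
    rw [real_inner_smul_right, ← neg_sub (T m p) p, inner_neg_right, real_inner_self_eq_norm_sq]
    ring
  have hle : (γ m)⁻¹ * ‖T m p - p‖ ^ 2 ≤ 0 := by
    linarith [ge_of_tendsto hlim (Eventually.of_forall hmono)]
  have hzero : ‖T m p - p‖ ^ 2 = 0 :=
    le_antisymm (nonpos_of_mul_nonpos_right hle (inv_pos.2 (hγ m))) (sq_nonneg _)
  simpa [sub_eq_zero] using hzero

end JointlyFirmlyNonexpansive

theorem stmt1_general
    {H : Type*} [NormedAddCommGroup H] [InnerProductSpace ℝ H] [CompleteSpace H]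
    (γ : ℕ → ℝ) (hγ : ∀ n, 0 < γ n)
    (hdiv : Tendsto (fun N => ∑ n ∈ Finset.range N, γ n ^ 2) atTop atTop)
    (T : ℕ → H → H) (hjfne : JointlyFirmlyNonexpansive T γ)
    (hF : ∃ q : H, ∀ n, T n q = q)
    (x : ℕ → H) (hx : ∀ n, x (n + 1) = T n (x n)) :
    ∃ p : H, (∀ n, T n p = p) ∧
      Tendsto (fun n => toWeakSpace ℝ H (x n)) atTop (nhds (toWeakSpace ℝ H p)) := by
  obtain ⟨q, hq⟩ := hF
  set F := {p : H | ∀ n, T n p = p}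
  have hfejer : ∀ p ∈ F, Antitone fun n => ‖x n - p‖ :=
    fun p hp => hjfne.antitone_norm_sub hγ hx hp
  have hbdd : ∀ n, ‖x n‖ ≤ ‖q‖ + ‖x 0 - q‖ := fun n =>
    (norm_le_norm_add_norm_sub' (x n) q).trans (by gcongr; exact hfejer q hq n.zero_le)
  have hvel := hjfne.tendsto_velocity_zero hγ hdiv hx hq
  -- the cluster-point lemma is about the values `x (n + 1) = T n (x n)`, hence the shift
  obtain ⟨p, hpF, hp⟩ :=
    exists_tendsto_toWeakSpace_of_antitone_norm_sub (x := fun n => x (n + 1)) (F := F) ⟨q, hq⟩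
      (fun p hp => (hfejer p hp).comp_monotone fun _ _ h => Nat.add_le_add_right h 1)
      (fun U hU p hp m => hjfne.apply_eq_of_tendsto_toWeakSpace hγ hx hbdd hvel hU hp m)
  exact ⟨p, hpF, (tendsto_add_atTop_iff_nat 1).1 hp⟩

theorem stmt1
    {H : Type*} [NormedAddCommGroup H] [InnerProductSpace ℝ H] [CompleteSpace H]
    (γ : ℕ → ℝ) (hγ : ∀ n, 0 < γ n)
    (hdiv : Tendsto (fun N => ∑ n ∈ Finset.range N, γ n ^ 2) atTop atTop)
    (T : ℕ → H → H) (hjfne : JointlyFirmlyNonexpansive T γ)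
    (hF : ∃ q : H, ∀ n, T n q = q)
    (x₀ : H) (x : ℕ → H) (hx0 : x 0 = x₀) (hx : ∀ n, x (n + 1) = T n (x n)) :
    ∃ p : H, (∀ n, T n p = p) ∧
      Tendsto (fun n => toWeakSpace ℝ H (x n)) atTop (nhds (toWeakSpace ℝ H p)) :=
  stmt1_general γ hγ hdiv T hjfne hF x hx
end

section
/- Let H be a real Hilbert space, A : H → 2^H a monotone set-valued operator, p a zero of A, b ∈ ℕ with b ≥ 1, and C the closed ball of center p and radius b. Let φ : [0,∞) → [0,∞) be nondecreasing with φ(t) = 0 iff t = 0, and assume A is uniformly monotone on C with modulus φ. Let (γ_n) be a sequence of positive reals, θ : ℕ → ℕ a rate of divergence for ∑_{n=0}^∞ γ_n² = ∞, and for each n let J_n : H → H be a resolvent of A of order γ_n. Let x ∈ C and define x₀ := x, x_{n+1} := J_n x_n. Then p is the unique zero of A in C and (x_n) converges strongly to p with rate of convergence Ψ given by Ψ(k) := θ(b²·(⌈2b/φ(1/(k+1))⌉ + 1)²) + 1. -/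
/-!
Write `dₙ = ‖xₙ - p‖`. Since `(xₙ - xₙ₊₁)/γₙ ∈ A xₙ₊₁` and `0 ∈ A p`, monotonicity gives
`⟪xₙ₊₁ - p, xₙ - xₙ₊₁⟫ ≥ 0`, hence `dₙ₊₁² + ‖xₙ - xₙ₊₁‖² ≤ dₙ²`: the iterates are Fejér monotone
and stay in `C`. As long as `dₙ₊₁ > ε`, uniform monotonicity and Cauchy–Schwarz give
`γₙ φ(ε) ≤ b ‖xₙ - xₙ₊₁‖`, so `γₙ² φ(ε)² ≤ b² (dₙ² - dₙ₊₁²)`. Summing telescopes to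
`φ(ε)² ∑ γₙ² ≤ b⁴`, which the rate of divergence `θ` forbids past the index `Ψ(k)`.
-/

open RealInnerProductSpace Metric

theorem exists_le_of_lt_sq_mul_sum {d γ : ℕ → ℝ} {R c ε : ℝ} {N : ℕ}
    (hd : ∀ n, 0 ≤ d n) (hdR : ∀ n, d n ≤ R)
    (hstep : ∀ m, ε < d (m + 1) → (γ m * c) ^ 2 ≤ R ^ 2 * (d m ^ 2 - d (m + 1) ^ 2))
    (hN : R ^ 4 < c ^ 2 * ∑ m ∈ Finset.range N, γ m ^ 2) : ∃ m ≤ N, d m ≤ ε := by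
  by_contra! hfar
  have htel : c ^ 2 * ∑ m ∈ Finset.range N, γ m ^ 2 ≤ R ^ 2 * (d 0 ^ 2 - d N ^ 2) := by
    rw [← Finset.sum_range_sub' (fun m ↦ d m ^ 2), Finset.mul_sum, Finset.mul_sum]
    refine Finset.sum_le_sum fun m hm ↦ ?_
    rw [← mul_pow, mul_comm c]
    exact hstep m (hfar (m + 1) (Finset.mem_range.1 hm))
  have h0 : d 0 ^ 2 ≤ R ^ 2 := pow_le_pow_left₀ (hd 0) (hdR 0) 2
  nlinarith [sq_nonneg R, sq_nonneg (d N)]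

theorem pow_four_lt_sq_mul_ceil_add_one_sq {R c : ℝ} (hR : 0 < R) (hc : 0 < c) :
    R ^ 4 < c ^ 2 * (R ^ 2 * (⌈2 * R / c⌉₊ + 1) ^ 2) := by
  have hceil : 2 * R ≤ ⌈2 * R / c⌉₊ * c := (div_le_iff₀ hc).1 (Nat.le_ceil _)
  have hlt : R < (⌈2 * R / c⌉₊ + 1) * c := by linarith
  have hsq : R ^ 2 < ((⌈2 * R / c⌉₊ + 1) * c) ^ 2 := by gcongr
  nlinarith [pow_pos hR 2]

section MonotoneOperator

variable {H : Type*} [NormedAddCommGroup H] [InnerProductSpace ℝ H]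

def IsMonotoneOperator (A : H → Set H) : Prop :=
  ∀ x y u v : H, u ∈ A x → v ∈ A y → 0 ≤ ⟪x - y, u - v⟫

def IsUniformlyMonotoneOn (A : H → Set H) (C : Set H) (φ : ℝ → ℝ) : Prop :=
  ∀ x ∈ C, ∀ y ∈ C, ∀ u v : H, u ∈ A x → v ∈ A y → φ ‖x - y‖ ≤ ⟪x - y, u - v⟫

theorem norm_sq_add_norm_sq_le_of_inner_nonneg {a b : H} (h : 0 ≤ ⟪a, b⟫) :
    ‖a‖ ^ 2 + ‖b‖ ^ 2 ≤ ‖a + b‖ ^ 2 := by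
  rw [norm_add_sq_real]
  linarith

theorem eq_of_zero_mem_of_isUniformlyMonotoneOn {A : H → Set H} {C : Set H} {φ : ℝ → ℝ}
    {p q : H} (hunif : IsUniformlyMonotoneOn A C φ) (hφnonneg : ∀ t, 0 ≤ t → 0 ≤ φ t)
    (hφzero : ∀ t, 0 ≤ t → (φ t = 0 ↔ t = 0)) (hqC : q ∈ C) (hpC : p ∈ C)
    (hq : (0 : H) ∈ A q) (hp : (0 : H) ∈ A p) : q = p := by
  have h := hunif q hqC p hpC 0 0 hq hp
  rw [sub_zero, inner_zero_right] at h
  have hφ : φ ‖q - p‖ = 0 := le_antisymm h (hφnonneg _ (norm_nonneg _))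
  rwa [hφzero _ (norm_nonneg _), norm_eq_zero, sub_eq_zero] at hφ

section ResolventStep

variable {A : H → Set H} {p x y : H} {γ : ℝ}

theorem inner_sub_nonneg_of_resolvent (hmono : IsMonotoneOperator A) (hp : (0 : H) ∈ A p)
    (hγ : 0 < γ) (hy : (1 / γ) • (x - y) ∈ A y) : 0 ≤ ⟪y - p, x - y⟫ := by
  have h := hmono y p _ 0 hy hp
  rw [sub_zero, real_inner_smul_right] at h
  exact nonneg_of_mul_nonneg_right h (by positivity)

theorem norm_sq_add_norm_sq_le_of_resolvent (hmono : IsMonotoneOperator A)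
    (hp : (0 : H) ∈ A p) (hγ : 0 < γ) (hy : (1 / γ) • (x - y) ∈ A y) :
    ‖y - p‖ ^ 2 + ‖x - y‖ ^ 2 ≤ ‖x - p‖ ^ 2 := by
  simpa only [sub_add_sub_cancel'] using
    norm_sq_add_norm_sq_le_of_inner_nonneg (inner_sub_nonneg_of_resolvent hmono hp hγ hy)

theorem mul_modulus_le_of_resolvent {C : Set H} {φ : ℝ → ℝ}
    (hunif : IsUniformlyMonotoneOn A C φ) (hyC : y ∈ C) (hpC : p ∈ C) (hp : (0 : H) ∈ A p)
    (hγ : 0 < γ) (hy : (1 / γ) • (x - y) ∈ A y) :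
    γ * φ ‖y - p‖ ≤ ‖y - p‖ * ‖x - y‖ := by
  have h := hunif y hyC p hpC _ 0 hy hp
  rw [sub_zero, real_inner_smul_right] at h
  calc γ * φ ‖y - p‖ ≤ γ * (1 / γ * ⟪y - p, x - y⟫) := by gcongr
    _ = ⟪y - p, x - y⟫ := by field_simp
    _ ≤ ‖y - p‖ * ‖x - y‖ := real_inner_le_norm _ _

end ResolventStep

section ProximalPoint

variable {A : H → Set H} {p : H} {γ : ℕ → ℝ} {J : ℕ → H → H} {x : ℕ → H}

theorem resolvent_iterate_mem (hJ : ∀ n, ∀ x : H, (1 / γ n) • (x - J n x) ∈ A (J n x))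
    (hx : ∀ n, x (n + 1) = J n (x n)) (n : ℕ) :
    (1 / γ n) • (x n - x (n + 1)) ∈ A (x (n + 1)) := by
  rw [hx n]
  exact hJ n (x n)

variable (hmono : IsMonotoneOperator A) (hp : (0 : H) ∈ A p) (hγ : ∀ n, 0 < γ n)
  (hJ : ∀ n, ∀ x : H, (1 / γ n) • (x - J n x) ∈ A (J n x)) (hx : ∀ n, x (n + 1) = J n (x n))
include hmono hp hγ hJ hx

theorem antitone_norm_sub_of_resolvent : Antitone fun n ↦ ‖x n - p‖ := by
  refine antitone_nat_of_succ_le fun n ↦ ?_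
  have h := norm_sq_add_norm_sq_le_of_resolvent hmono hp (hγ n) (resolvent_iterate_mem hJ hx n)
  exact (pow_le_pow_iff_left₀ (norm_nonneg _) (norm_nonneg _) two_ne_zero).1
    (by nlinarith [sq_nonneg ‖x n - x (n + 1)‖])

theorem mem_closedBall_of_resolvent {R : ℝ} (hx0 : x 0 ∈ closedBall p R) (n : ℕ) :
    x n ∈ closedBall p R := by
  rw [mem_closedBall_iff_norm] at hx0 ⊢
  exact (antitone_norm_sub_of_resolvent hmono hp hγ hJ hx (Nat.zero_le n)).trans hx0

theorem sq_mul_modulus_le_of_resolvent {R ε : ℝ} {φ : ℝ → ℝ}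
    (hunif : IsUniformlyMonotoneOn A (closedBall p R) φ)
    (hφmono : ∀ s t, 0 ≤ s → s ≤ t → φ s ≤ φ t) (hφnonneg : ∀ t, 0 ≤ t → 0 ≤ φ t)
    (hx0 : x 0 ∈ closedBall p R) (hε : 0 ≤ ε) (m : ℕ) (hm : ε < ‖x (m + 1) - p‖) :
    (γ m * φ ε) ^ 2 ≤ R ^ 2 * (‖x m - p‖ ^ 2 - ‖x (m + 1) - p‖ ^ 2) := by
  have hmem := mem_closedBall_of_resolvent hmono hp hγ hJ hx hx0
  have hpC : p ∈ closedBall p R := mem_closedBall_self (dist_nonneg.trans (hmem 0))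
  have hstep := resolvent_iterate_mem hJ hx m
  have hR : ‖x (m + 1) - p‖ ≤ R := mem_closedBall_iff_norm.1 (hmem (m + 1))
  have hmod := mul_modulus_le_of_resolvent hunif (hmem (m + 1)) hpC hp (hγ m) hstep
  have hsq := norm_sq_add_norm_sq_le_of_resolvent hmono hp (hγ m) hstep
  have hφ : γ m * φ ε ≤ R * ‖x m - x (m + 1)‖ :=
    calc γ m * φ ε ≤ γ m * φ ‖x (m + 1) - p‖ := by
          gcongr; exacts [(hγ m).le, hφmono _ _ hε hm.le]
      _ ≤ ‖x (m + 1) - p‖ * ‖x m - x (m + 1)‖ := hmod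
      _ ≤ R * ‖x m - x (m + 1)‖ := by gcongr
  calc (γ m * φ ε) ^ 2 ≤ (R * ‖x m - x (m + 1)‖) ^ 2 := by
        gcongr
        exact mul_nonneg (hγ m).le (hφnonneg ε hε)
    _ ≤ R ^ 2 * (‖x m - p‖ ^ 2 - ‖x (m + 1) - p‖ ^ 2) := by
        rw [mul_pow]
        gcongr
        linarith

end ProximalPoint

end MonotoneOperator

theorem stmt6_general
    {H : Type*} [NormedAddCommGroup H] [InnerProductSpace ℝ H]
    (A : H → Set H)
    (hmono : ∀ x y u v : H, u ∈ A x → v ∈ A y → 0 ≤ ⟪x - y, u - v⟫)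
    (p : H) (hp : (0 : H) ∈ A p)
    (b : ℕ) (hb : 1 ≤ b) (C : Set H) (hC : C = Metric.closedBall p b)
    (φ : ℝ → ℝ) (hφmono : ∀ s t : ℝ, 0 ≤ s → s ≤ t → φ s ≤ φ t)
    (hφnonneg : ∀ t : ℝ, 0 ≤ t → 0 ≤ φ t)
    (hφzero : ∀ t : ℝ, 0 ≤ t → (φ t = 0 ↔ t = 0))
    (hunif : ∀ x ∈ C, ∀ y ∈ C, ∀ u v : H, u ∈ A x → v ∈ A y →
      φ ‖x - y‖ ≤ ⟪x - y, u - v⟫)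
    (γ : ℕ → ℝ) (hγ : ∀ n, 0 < γ n)
    (θ : ℕ → ℕ) (hθ : ∀ K : ℕ, (K : ℝ) ≤ ∑ n ∈ Finset.range (θ K + 1), γ n ^ 2)
    (J : ℕ → H → H)
    (hJ : ∀ n, ∀ x : H, (1 / γ n) • (x - J n x) ∈ A (J n x))
    (x₀ : H) (hx₀C : x₀ ∈ C)
    (x : ℕ → H) (hx0 : x 0 = x₀) (hx : ∀ n, x (n + 1) = J n (x n)) :
    (∀ q ∈ C, (0 : H) ∈ A q → q = p) ∧
    (∀ k : ℕ, ∀ n : ℕ,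
      θ (b ^ 2 * (⌈(2 * (b : ℝ)) / φ (1 / ((k : ℝ) + 1))⌉₊ + 1) ^ 2) + 1 ≤ n →
      ‖x n - p‖ ≤ 1 / ((k : ℝ) + 1)) := by
  subst hC hx0
  have hpC : p ∈ closedBall p (b : ℝ) := mem_closedBall_self (Nat.cast_nonneg b)
  refine ⟨fun q hqC hq ↦
    eq_of_zero_mem_of_isUniformlyMonotoneOn hunif hφnonneg hφzero hqC hpC hq hp, ?_⟩
  intro k n hn
  set ε : ℝ := 1 / ((k : ℝ) + 1)
  have hε : 0 < ε := by positivity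
  have hφε : 0 < φ ε := (hφnonneg ε hε.le).lt_of_ne' ((hφzero ε hε.le).not.2 hε.ne')
  have hb' : (0 : ℝ) < b := by exact_mod_cast hb
  have hK := hθ (b ^ 2 * (⌈2 * (b : ℝ) / φ ε⌉₊ + 1) ^ 2)
  push_cast at hK
  have hN := (pow_four_lt_sq_mul_ceil_add_one_sq hb' hφε).trans_le
    (mul_le_mul_of_nonneg_left hK (sq_nonneg _))
  obtain ⟨m, hmN, hm⟩ := exists_le_of_lt_sq_mul_sum (fun _ ↦ norm_nonneg _)
    (fun n ↦ mem_closedBall_iff_norm.1 (mem_closedBall_of_resolvent hmono hp hγ hJ hx hx₀C n))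
    (sq_mul_modulus_le_of_resolvent hmono hp hγ hJ hx hunif hφmono hφnonneg hx₀C hε.le) hN
  exact (antitone_norm_sub_of_resolvent hmono hp hγ hJ hx (hmN.trans hn)).trans hm

theorem stmt6
    {H : Type*} [NormedAddCommGroup H] [InnerProductSpace ℝ H] [CompleteSpace H]
    (A : H → Set H)
    (hmono : ∀ x y u v : H, u ∈ A x → v ∈ A y → 0 ≤ ⟪x - y, u - v⟫)
    (p : H) (hp : (0 : H) ∈ A p)
    (b : ℕ) (hb : 1 ≤ b) (C : Set H) (hC : C = Metric.closedBall p b)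
    (φ : ℝ → ℝ) (hφmono : ∀ s t : ℝ, 0 ≤ s → s ≤ t → φ s ≤ φ t)
    (hφnonneg : ∀ t : ℝ, 0 ≤ t → 0 ≤ φ t)
    (hφzero : ∀ t : ℝ, 0 ≤ t → (φ t = 0 ↔ t = 0))
    (hunif : ∀ x ∈ C, ∀ y ∈ C, ∀ u v : H, u ∈ A x → v ∈ A y →
      φ ‖x - y‖ ≤ ⟪x - y, u - v⟫)
    (γ : ℕ → ℝ) (hγ : ∀ n, 0 < γ n)
    (θ : ℕ → ℕ) (hθ : ∀ K : ℕ, (K : ℝ) ≤ ∑ n ∈ Finset.range (θ K + 1), γ n ^ 2)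
    (J : ℕ → H → H)
    (hJ : ∀ n, ∀ x : H, (1 / γ n) • (x - J n x) ∈ A (J n x))
    (x₀ : H) (hx₀C : x₀ ∈ C)
    (x : ℕ → H) (hx0 : x 0 = x₀) (hx : ∀ n, x (n + 1) = J n (x n)) :
    (∀ q ∈ C, (0 : H) ∈ A q → q = p) ∧
    (∀ k : ℕ, ∀ n : ℕ,
      θ (b ^ 2 * (⌈(2 * (b : ℝ)) / φ (1 / ((k : ℝ) + 1))⌉₊ + 1) ^ 2) + 1 ≤ n →
      ‖x n - p‖ ≤ 1 / ((k : ℝ) + 1)) :=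
  stmt6_general A hmono p hp b hb C hC φ hφmono hφnonneg hφzero hunif γ hγ θ hθ J hJ x₀ hx₀C x hx0
    hx
end

section
/- Let H be a real Hilbert space and T : H → H a map satisfying property (P₂). Then T is nonexpansive, i.e. ‖Tx − Ty‖ ≤ ‖x − y‖ for all x, y ∈ H. -/
section InnerProduct

variable {E : Type*} [NormedAddCommGroup E] [InnerProductSpace ℝ E]

theorem norm_sub_sq_add_norm_sub_sq_sub_sub_real (x y a b : E) :
    ‖x - b‖ ^ 2 + ‖y - a‖ ^ 2 - ‖x - a‖ ^ 2 - ‖y - b‖ ^ 2 = 2 * inner ℝ (x - y) (a - b) := by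
  simp only [norm_sub_sq_real, inner_sub_left, inner_sub_right]
  ring

theorem norm_le_of_sq_norm_le_inner {u v : E} (h : ‖v‖ ^ 2 ≤ inner ℝ u v) : ‖v‖ ≤ ‖u‖ := by
  rcases (norm_nonneg v).eq_or_lt with hv | hv
  · rw [← hv]
    exact norm_nonneg u
  · have : ‖v‖ * ‖v‖ ≤ ‖u‖ * ‖v‖ := by
      nlinarith [real_inner_le_norm u v]
    exact le_of_mul_le_mul_right this hv

end InnerProduct

theorem stmt11
    {H : Type*} [NormedAddCommGroup H] [InnerProductSpace ℝ H]
    (T : H → H)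
    (hP2 : ∀ x y : H, 2 * ‖T x - T y‖ ^ 2 ≤
      ‖x - T y‖ ^ 2 + ‖y - T x‖ ^ 2 - ‖x - T x‖ ^ 2 - ‖y - T y‖ ^ 2) :
    ∀ x y : H, ‖T x - T y‖ ≤ ‖x - y‖ := by
  intro x y
  have firmly_nonexpansive : ‖T x - T y‖ ^ 2 ≤ inner ℝ (x - y) (T x - T y) := by
    have h := hP2 x y
    rw [norm_sub_sq_add_norm_sub_sq_sub_sub_real] at h
    linarith
  exact norm_le_of_sq_norm_le_inner firmly_nonexpansive
end

section
/- Let H be a real Hilbert space, (T_n) a family of self-maps of H, and (γ_n) a sequence of positive reals. Then (T_n) is jointly (P₂) with respect to (γ_n) if and only if (T_n) is jointly firmly nonexpansive with respect to (γ_n). -/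
open RealInnerProductSpace

/-- The joint (P₂) condition for a family of self-maps of a real Hilbert space
with respect to a sequence of positive reals. -/
def JointlyP2 {H : Type*} [NormedAddCommGroup H] [InnerProductSpace ℝ H]
    (T : ℕ → H → H) (γ : ℕ → ℝ) : Prop :=
  ∀ n m : ℕ, ∀ x y : H,
    (1 / γ m) * (‖T n x - T m y‖ ^ 2 + ‖y - T m y‖ ^ 2 - ‖y - T n x‖ ^ 2) ≤
    (1 / γ n) * (‖x - T m y‖ ^ 2 - ‖x - T n x‖ ^ 2 - ‖T n x - T m y‖ ^ 2)

/-!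
Write `u = x - Tₙ x`, `v = y - Tₘ y`, `w = Tₙ x - Tₘ y` and `d = u / γₙ - v / γₘ`. By
polarization, the (P₂) inequality at `(n, m, x, y)` says exactly `0 ≤ ⟪w, d⟫`. On the other
side, if `(1 - α) γₙ = (1 - β) γₘ = c`, then the difference of the averaged points is
`w + c • d`, and `c` ranges over `[0, min γₙ γₘ]`. Since
`‖w + c • d‖² = ‖w‖² + 2 c ⟪w, d⟫ + c² ‖d‖²`, the inequality `‖w‖ ≤ ‖w + c • d‖` holds for
all small `c ≥ 0` if and only if `0 ≤ ⟪w, d⟫`.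
-/

open Set Filter Topology

lemma nonneg_of_forall_mem_Ioc_nonneg_add_mul {a b ε : ℝ} (hε : 0 < ε)
    (h : ∀ c ∈ Ioc 0 ε, 0 ≤ a + c * b) : 0 ≤ a := by
  have hlim : Tendsto (fun c : ℝ => a + c * b) (𝓝[>] 0) (𝓝 a) := by
    have : Continuous fun c : ℝ => a + c * b := by fun_prop
    simpa using (this.tendsto 0).mono_left nhdsWithin_le_nhds
  exact ge_of_tendsto hlim (eventually_of_mem (Ioc_mem_nhdsGT hε) h)

section InnerProductSpace

variable {H : Type*} [NormedAddCommGroup H] [InnerProductSpace ℝ H]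

lemma inner_nonneg_iff_forall_norm_le_norm_add_smul {w d : H} {ε : ℝ} (hε : 0 < ε) :
    0 ≤ ⟪w, d⟫ ↔ ∀ c ∈ Icc 0 ε, ‖w‖ ≤ ‖w + c • d‖ := by
  have hexpand (c : ℝ) : ‖w + c • d‖ ^ 2 = ‖w‖ ^ 2 + c * (2 * ⟪w, d⟫ + c * ‖d‖ ^ 2) := by
    rw [norm_add_sq_real, real_inner_smul_right, norm_smul, Real.norm_eq_abs, mul_pow, sq_abs]
    ring
  constructor
  · intro h c hc
    refine le_of_pow_le_pow_left₀ two_ne_zero (norm_nonneg _) ?_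
    rw [hexpand]
    have : 0 ≤ c * (2 * ⟪w, d⟫ + c * ‖d‖ ^ 2) :=
      mul_nonneg hc.1 (add_nonneg (by linarith) (mul_nonneg hc.1 (sq_nonneg _)))
    linarith
  · intro h
    suffices 0 ≤ 2 * ⟪w, d⟫ by linarith
    refine nonneg_of_forall_mem_Ioc_nonneg_add_mul (b := ‖d‖ ^ 2) hε fun c hc => ?_
    have hsq := pow_le_pow_left₀ (norm_nonneg _) (h c (Ioc_subset_Icc_self hc)) 2
    rw [hexpand] at hsq
    exact nonneg_of_mul_nonneg_right (by linarith) hc.1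

lemma p2_inequality_iff_inner_nonneg (p q : ℝ) (x y a b : H) :
    (1 / q) * (‖a - b‖ ^ 2 + ‖y - b‖ ^ 2 - ‖y - a‖ ^ 2) ≤
      (1 / p) * (‖x - b‖ ^ 2 - ‖x - a‖ ^ 2 - ‖a - b‖ ^ 2) ↔
    0 ≤ ⟪a - b, p⁻¹ • (x - a) - q⁻¹ • (y - b)⟫ := by
  have hy : ‖y - a‖ ^ 2 = ‖y - b‖ ^ 2 - 2 * ⟪y - b, a - b⟫ + ‖a - b‖ ^ 2 := by
    rw [← norm_sub_sq_real, sub_sub_sub_cancel_right]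
  have hx : ‖x - b‖ ^ 2 = ‖x - a‖ ^ 2 + 2 * ⟪x - a, a - b⟫ + ‖a - b‖ ^ 2 := by
    rw [← norm_add_sq_real, sub_add_sub_cancel]
  have hd : ⟪a - b, p⁻¹ • (x - a) - q⁻¹ • (y - b)⟫ =
      p⁻¹ * ⟪x - a, a - b⟫ - q⁻¹ * ⟪y - b, a - b⟫ := by
    rw [inner_sub_right, real_inner_smul_right, real_inner_smul_right,
      real_inner_comm (x - a), real_inner_comm (y - b)]
  rw [hx, hy, hd]
  ring_nf
  constructor <;> intro h <;> linarith

lemma averaged_sub_averaged_eq {p q α β : ℝ} (hp : p ≠ 0) (hq : q ≠ 0)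
    (h : (1 - α) * p = (1 - β) * q) (x y a b : H) :
    ((1 - α) • x + α • a) - ((1 - β) • y + β • b) =
      (a - b) + ((1 - α) * p) • (p⁻¹ • (x - a) - q⁻¹ • (y - b)) := by
  rw [smul_sub, smul_smul, smul_smul]
  nth_rw 2 [h]
  rw [mul_inv_cancel_right₀ hp, mul_inv_cancel_right₀ hq]
  module

lemma fne_inequality_iff_inner_nonneg {p q : ℝ} (hp : 0 < p) (hq : 0 < q) (x y a b : H) :
    (∀ α β : ℝ, α ∈ Icc (0 : ℝ) 1 → β ∈ Icc (0 : ℝ) 1 → (1 - α) * p = (1 - β) * q →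
      ‖a - b‖ ≤ ‖((1 - α) • x + α • a) - ((1 - β) • y + β • b)‖) ↔
    0 ≤ ⟪a - b, p⁻¹ • (x - a) - q⁻¹ • (y - b)⟫ := by
  rw [inner_nonneg_iff_forall_norm_le_norm_add_smul (lt_min hp hq)]
  constructor
  · intro h c ⟨hc0, hcpq⟩
    have hcp : c / p ≤ 1 := (div_le_one hp).2 (hcpq.trans (min_le_left _ _))
    have hcq : c / q ≤ 1 := (div_le_one hq).2 (hcpq.trans (min_le_right _ _))
    have hαβ : (1 - (1 - c / p)) * p = (1 - (1 - c / q)) * q := by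
      rw [sub_sub_cancel, sub_sub_cancel, div_mul_cancel₀ c hp.ne', div_mul_cancel₀ c hq.ne']
    have := h (1 - c / p) (1 - c / q)
      ⟨sub_nonneg.2 hcp, sub_le_self _ (div_nonneg hc0 hp.le)⟩
      ⟨sub_nonneg.2 hcq, sub_le_self _ (div_nonneg hc0 hq.le)⟩ hαβ
    rwa [averaged_sub_averaged_eq hp.ne' hq.ne' hαβ, hαβ, sub_sub_cancel,
      div_mul_cancel₀ c hq.ne'] at this
  · intro h α β hα hβ hαβ
    rw [averaged_sub_averaged_eq hp.ne' hq.ne' hαβ]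
    refine h _ ⟨mul_nonneg (sub_nonneg.2 hα.2) hp.le, le_min ?_ ?_⟩
    · exact mul_le_of_le_one_left hp.le (sub_le_self _ hα.1)
    · exact hαβ ▸ mul_le_of_le_one_left hq.le (sub_le_self _ hβ.1)

end InnerProductSpace

theorem stmt12
    {H : Type*} [NormedAddCommGroup H] [InnerProductSpace ℝ H]
    (T : ℕ → H → H) (γ : ℕ → ℝ) (hγ : ∀ n, 0 < γ n) :
    JointlyP2 T γ ↔ JointlyFirmlyNonexpansive T γ := by
  refine forall₂_congr fun n m => forall₂_congr fun x y => ?_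
  rw [p2_inequality_iff_inner_nonneg, fne_inequality_iff_inner_nonneg (hγ n) (hγ m)]
end

section
/- Let H be a real Hilbert space, (γ_n) a sequence of positive reals, and (T_n) a family of self-maps of H that is jointly (P₂) with respect to (γ_n). Let x ∈ H and let (x_n) be the proximal-point iteration starting at x. Then the sequence (‖x_n − x_{n+1}‖/γ_n) is nonincreasing, i.e. ‖x_{n+1} − x_{n+2}‖/γ_{n+1} ≤ ‖x_n − x_{n+1}‖/γ_n for all n ∈ ℕ. -/
section

variable {H : Type*} [NormedAddCommGroup H] [InnerProductSpace ℝ H] {T : ℕ → H → H} {γ : ℕ → ℝ}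

lemma JointlyP2.two_mul_sq_norm_step_le (hT : JointlyP2 T γ) (n : ℕ) (y : H) :
    2 * ‖T n y - T (n + 1) (T n y)‖ ^ 2 / γ (n + 1) ≤
      (‖y - T (n + 1) (T n y)‖ ^ 2 - ‖y - T n y‖ ^ 2 - ‖T n y - T (n + 1) (T n y)‖ ^ 2) / γ n := by
  have h := hT n (n + 1) y (T n y)
  simp only [sub_self, norm_zero] at h
  calc 2 * ‖T n y - T (n + 1) (T n y)‖ ^ 2 / γ (n + 1)
      = 1 / γ (n + 1) * (‖T n y - T (n + 1) (T n y)‖ ^ 2 + ‖T n y - T (n + 1) (T n y)‖ ^ 2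
          - 0 ^ 2) := by ring
    _ ≤ _ := h
    _ = _ := by ring

lemma JointlyP2.norm_step_div_le (hT : JointlyP2 T γ) {n : ℕ} (hγn : 0 < γ n) (y : H) :
    ‖T n y - T (n + 1) (T n y)‖ / γ (n + 1) ≤ ‖y - T n y‖ / γ n := by
  set u := T n y
  set w := T (n + 1) u
  have hstep := hT.two_mul_sq_norm_step_le n y
  have htri : ‖y - w‖ ^ 2 ≤ (‖y - u‖ + ‖u - w‖) ^ 2 :=
    pow_le_pow_left₀ (norm_nonneg _) (norm_sub_le_norm_sub_add_norm_sub y u w) 2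
  have hsq : ‖u - w‖ * (‖u - w‖ / γ (n + 1)) ≤ ‖u - w‖ * (‖y - u‖ / γ n) := by
    have hpoly : ‖y - w‖ ^ 2 - ‖y - u‖ ^ 2 - ‖u - w‖ ^ 2 ≤ 2 * (‖u - w‖ * ‖y - u‖) := by
      nlinarith
    calc ‖u - w‖ * (‖u - w‖ / γ (n + 1)) = 2 * ‖u - w‖ ^ 2 / γ (n + 1) / 2 := by ring
      _ ≤ (‖y - w‖ ^ 2 - ‖y - u‖ ^ 2 - ‖u - w‖ ^ 2) / γ n / 2 := by gcongr
      _ ≤ 2 * (‖u - w‖ * ‖y - u‖) / γ n / 2 := by gcongr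
      _ = ‖u - w‖ * (‖y - u‖ / γ n) := by ring
  rcases (norm_nonneg (u - w)).eq_or_lt with hzero | hpos
  · rw [← hzero, zero_div]
    positivity
  · exact le_of_mul_le_mul_left hsq hpos

end

theorem stmt14_general
    {H : Type*} [NormedAddCommGroup H] [InnerProductSpace ℝ H]
    (γ : ℕ → ℝ) (hγ : ∀ n, 0 < γ n)
    (T : ℕ → H → H) (hJP2 : JointlyP2 T γ)
    (x : ℕ → H) (hx : ∀ n, x (n + 1) = T n (x n)) :
    ∀ n : ℕ, ‖x (n + 1) - x (n + 2)‖ / γ (n + 1) ≤ ‖x n - x (n + 1)‖ / γ n := by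
  intro n
  rw [hx (n + 1), hx n]
  exact hJP2.norm_step_div_le (hγ n) (x n)

theorem stmt14
    {H : Type*} [NormedAddCommGroup H] [InnerProductSpace ℝ H]
    (γ : ℕ → ℝ) (hγ : ∀ n, 0 < γ n)
    (T : ℕ → H → H) (hJP2 : JointlyP2 T γ)
    (x₀ : H) (x : ℕ → H) (hx0 : x 0 = x₀) (hx : ∀ n, x (n + 1) = T n (x n)) :
    ∀ n : ℕ, ‖x (n + 1) - x (n + 2)‖ / γ (n + 1) ≤ ‖x n - x (n + 1)‖ / γ n :=
  stmt14_general γ hγ T hJP2 x hx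
end

section
/- Let H be a real Hilbert space, f : H → ℝ a convex function, (γ_n) a sequence of positive reals, and for each n let J_n : H → H be a proximal mapping of f of order γ_n. Then the family (J_n) is jointly firmly nonexpansive with respect to (γ_n). -/
open Filter Topology
open scoped InnerProductSpace

section

variable {H : Type*} [NormedAddCommGroup H] [InnerProductSpace ℝ H]

def IsProximalPoint (f : H → ℝ) (γ : ℝ) (x u : H) : Prop :=
  ∀ y, f u + (1 / (2 * γ)) * ‖x - u‖ ^ 2 ≤ f y + (1 / (2 * γ)) * ‖x - y‖ ^ 2

lemma le_of_forall_pos_le_one_le_add_mul {a b c : ℝ}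
    (h : ∀ t : ℝ, 0 < t → t ≤ 1 → a ≤ b + t * c) : a ≤ b := by
  have hlim : Tendsto (fun t : ℝ ↦ b + t * c) (𝓝[>] 0) (𝓝 b) := by
    have hcont : Continuous fun t : ℝ ↦ b + t * c := by fun_prop
    simpa using (hcont.tendsto 0).mono_left nhdsWithin_le_nhds
  refine ge_of_tendsto hlim ?_
  filter_upwards [Ioc_mem_nhdsGT (zero_lt_one' ℝ)] with t ht using h t ht.1 ht.2

lemma norm_le_norm_add_of_inner_nonneg {a b : H} (h : 0 ≤ ⟪a, b⟫_ℝ) : ‖a‖ ≤ ‖a + b‖ := by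
  refine (pow_le_pow_iff_left₀ (norm_nonneg _) (norm_nonneg _) two_ne_zero).mp ?_
  rw [norm_add_sq_real]
  linarith [sq_nonneg ‖b‖]

lemma ConvexOn.inner_sub_le_of_isProximalPoint {f : H → ℝ} (hf : ConvexOn ℝ Set.univ f)
    {γ : ℝ} (hγ : 0 < γ) {x u : H} (hu : IsProximalPoint f γ x u) (v : H) :
    ⟪x - u, v - u⟫_ℝ ≤ γ * (f v - f u) := by
  refine le_of_forall_pos_le_one_le_add_mul (c := ‖v - u‖ ^ 2 / 2) fun t ht ht1 ↦ ?_
  have hprox := hu ((1 - t) • u + t • v)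
  have hconv : f ((1 - t) • u + t • v) ≤ (1 - t) * f u + t * f v :=
    hf.2 (Set.mem_univ u) (Set.mem_univ v) (by linarith) ht.le (by ring)
  have hexpand : ‖x - ((1 - t) • u + t • v)‖ ^ 2
      = ‖x - u‖ ^ 2 - 2 * t * ⟪x - u, v - u⟫_ℝ + t ^ 2 * ‖v - u‖ ^ 2 := by
    rw [show x - ((1 - t) • u + t • v) = (x - u) - t • (v - u) by module, norm_sub_sq_real,
      real_inner_smul_right, norm_smul, Real.norm_of_nonneg ht.le]
    ring
  rw [hexpand] at hprox
  have hscaled : t * ⟪x - u, v - u⟫_ℝ ≤ t * (γ * (f v - f u) + t * (‖v - u‖ ^ 2 / 2)) := by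
    have hγ_half : γ * (1 / (2 * γ)) = 1 / 2 := by field_simp
    linear_combination γ * (hprox.trans (add_le_add_left hconv _))
      - (2 * t * ⟪x - u, v - u⟫_ℝ - t ^ 2 * ‖v - u‖ ^ 2) * hγ_half
  exact le_of_mul_le_mul_left hscaled ht

end

theorem stmt15
    {H : Type*} [NormedAddCommGroup H] [InnerProductSpace ℝ H]
    (f : H → ℝ) (hconv : ConvexOn ℝ Set.univ f)
    (γ : ℕ → ℝ) (hγ : ∀ n, 0 < γ n)
    (J : ℕ → H → H)
    (hJ : ∀ n, ∀ x y : H,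
      f (J n x) + (1 / (2 * γ n)) * ‖x - J n x‖ ^ 2 ≤ f y + (1 / (2 * γ n)) * ‖x - y‖ ^ 2) :
    JointlyFirmlyNonexpansive J γ := by
  rintro n m x y α β ⟨-, hα1⟩ ⟨-, hβ1⟩ hγαβ
  set u := J n x
  set v := J m y
  have hu : ⟪x - u, v - u⟫_ℝ ≤ γ n * (f v - f u) :=
    hconv.inner_sub_le_of_isProximalPoint (hγ n) (hJ n x) v
  have hv : ⟪y - v, u - v⟫_ℝ ≤ γ m * (f u - f v) :=
    hconv.inner_sub_le_of_isProximalPoint (hγ m) (hJ m y) u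
  set w := (1 - α) • (x - u) - (1 - β) • (y - v)
  have hw : 0 ≤ ⟪u - v, w⟫_ℝ := by
    have hexpand : ⟪u - v, w⟫_ℝ = -((1 - α) * ⟪x - u, v - u⟫_ℝ) - (1 - β) * ⟪y - v, u - v⟫_ℝ := by
      rw [← neg_sub v u]
      simp only [w, inner_sub_right, inner_neg_left, inner_neg_right, real_inner_smul_right,
        real_inner_comm (x - u), real_inner_comm (y - v)]
      ring
    have hcancel : (1 - α) * (γ n * (f v - f u)) + (1 - β) * (γ m * (f u - f v)) = 0 := by
      linear_combination (f v - f u) * hγαβ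
    rw [hexpand]
    linarith [mul_le_mul_of_nonneg_left hu (sub_nonneg.2 hα1),
      mul_le_mul_of_nonneg_left hv (sub_nonneg.2 hβ1)]
  calc ‖u - v‖ ≤ ‖u - v + w‖ := norm_le_norm_add_of_inner_nonneg hw
    _ = _ := by congr 1; module
end

section
/- Let H be a real Hilbert space, T : H → H a nonexpansive mapping, (γ_n) a sequence of positive reals, and for each n let R_n : H → H satisfy R_n x = (1/(1+γ_n))·x + (γ_n/(1+γ_n))·T(R_n x) for all x ∈ H. Then the family (R_n) is jointly firmly nonexpansive with respect to (γ_n). -/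
theorem norm_le_norm_add_smul_sub {H : Type*} [NormedAddCommGroup H] [InnerProductSpace ℝ H]
    {u v : H} {l : ℝ} (hl : 0 ≤ l) (h : ‖v‖ ≤ ‖u‖) :
    ‖u‖ ≤ ‖u + l • (u - v)‖ := by
  have hinner : 0 ≤ inner ℝ u (u - v) := by
    rw [inner_sub_right, real_inner_self_eq_norm_sq]
    nlinarith [real_inner_le_norm u v, norm_nonneg v]
  have hsq : ‖u‖ ^ 2 ≤ ‖u + l • (u - v)‖ ^ 2 := by
    rw [norm_add_sq_real, real_inner_smul_right]
    nlinarith [sq_nonneg ‖l • (u - v)‖, mul_nonneg hl hinner]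
  exact (pow_le_pow_iff_left₀ (norm_nonneg _) (norm_nonneg _) two_ne_zero).mp hsq

theorem one_sub_smul_add_smul_eq_of_eq_resolvent {K E : Type*} [Field K] [AddCommGroup E]
    [Module K E] {g : K} (hg : 1 + g ≠ 0) {a x t : E}
    (h : a = (1 / (1 + g)) • x + (g / (1 + g)) • t) (α : K) :
    (1 - α) • x + α • a = a + ((1 - α) * g) • (a - t) := by
  have hx : x = a + g • (a - t) := by
    rw [h]
    match_scalars <;> field_simp
    ring
  conv_lhs => rw [hx]
  match_scalars <;> ring

theorem stmt16
    {H : Type*} [NormedAddCommGroup H] [InnerProductSpace ℝ H]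
    (T : H → H) (hT : ∀ x y : H, ‖T x - T y‖ ≤ ‖x - y‖)
    (γ : ℕ → ℝ) (hγ : ∀ n, 0 < γ n)
    (R : ℕ → H → H)
    (hR : ∀ n, ∀ x : H,
      R n x = (1 / (1 + γ n)) • x + (γ n / (1 + γ n)) • T (R n x)) :
    JointlyFirmlyNonexpansive R γ := by
  intro n m x y α β ⟨_, hα1⟩ _ hαβ
  have hres : ∀ k z (δ : ℝ), (1 - δ) • z + δ • R k z
      = R k z + ((1 - δ) * γ k) • (R k z - T (R k z)) := fun k z δ =>
    one_sub_smul_add_smul_eq_of_eq_resolvent (by linarith [hγ k]) (hR k z) δ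
  have hl : 0 ≤ (1 - α) * γ n := mul_nonneg (by linarith) (hγ n).le
  rw [hres, hres, ← hαβ, add_sub_add_comm, ← smul_sub, sub_sub_sub_comm]
  exact norm_le_norm_add_smul_sub hl (hT _ _)
end

section
/- Let H be a real Hilbert space, A : H → 2^H a monotone set-valued operator, (γ_n) a sequence of positive reals, and for each n let J_n : H → H be a resolvent of A of order γ_n. Then the family (J_n) is jointly firmly nonexpansive with respect to (γ_n). -/
/-!
With `p = J_n x`, `q = J_m y` and `u = (x - p) / γ_n ∈ A p`, `v = (y - q) / γ_m ∈ A q`, the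
constraint `(1 - α) γ_n = (1 - β) γ_m =: c` lets both convex combinations be written with the
same weight: `(1 - α) x + α p = p + c u` and `(1 - β) y + β q = q + c v`. Their difference is
`(p - q) + c (u - v)`, and monotonicity gives `⟪p - q, u - v⟫ ≥ 0`, so adding `c (u - v)` with
`c ≥ 0` can only increase the norm of `p - q`.
-/

open RealInnerProductSpace

section

variable {H : Type*} [NormedAddCommGroup H] [InnerProductSpace ℝ H]

theorem norm_le_norm_add_smul_of_inner_nonneg {a b : H} {c : ℝ} (hc : 0 ≤ c)
    (hab : 0 ≤ ⟪a, b⟫) : ‖a‖ ≤ ‖a + c • b‖ := by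
  have hcross : 0 ≤ ⟪a, c • b⟫ := by
    rw [real_inner_smul_right]
    positivity
  refine le_of_pow_le_pow_left₀ two_ne_zero (norm_nonneg _) ?_
  rw [norm_add_sq_real]
  linarith [sq_nonneg ‖c • b‖]

theorem one_sub_smul_add_smul_eq_add_mul_smul_one_div_smul (x p : H) {α γ : ℝ} (hγ : γ ≠ 0) :
    (1 - α) • x + α • p = p + ((1 - α) * γ) • ((1 / γ) • (x - p)) := by
  rw [smul_smul, mul_assoc, mul_one_div_cancel hγ, mul_one]
  module

end

theorem stmt17
    {H : Type*} [NormedAddCommGroup H] [InnerProductSpace ℝ H]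
    (A : H → Set H)
    (hmono : ∀ x y u v : H, u ∈ A x → v ∈ A y → 0 ≤ ⟪x - y, u - v⟫)
    (γ : ℕ → ℝ) (hγ : ∀ n, 0 < γ n)
    (J : ℕ → H → H)
    (hJ : ∀ n, ∀ x : H, (1 / γ n) • (x - J n x) ∈ A (J n x)) :
    JointlyFirmlyNonexpansive J γ := by
  intro n m x y α β hα _ hαβ
  have hc : 0 ≤ (1 - α) * γ n := mul_nonneg (sub_nonneg.2 hα.2) (hγ n).le
  rw [one_sub_smul_add_smul_eq_add_mul_smul_one_div_smul x (J n x) (hγ n).ne',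
    one_sub_smul_add_smul_eq_add_mul_smul_one_div_smul y (J m y) (hγ m).ne', ← hαβ,
    add_sub_add_comm, ← smul_sub]
  exact norm_le_norm_add_smul_of_inner_nonneg hc (hmono _ _ _ _ (hJ n x) (hJ m y))
end

section
/- Let H be a real Hilbert space, C ⊆ H nonempty, φ : [0,∞) → [0,∞) nondecreasing with φ(t) = 0 iff t = 0, and T : H → H uniformly (P₂) on C with modulus φ. Then T is uniformly firmly nonexpansive on C with the same modulus φ, i.e. T(C) ⊆ C and for all x, y ∈ C and t ∈ [0,1]: ‖Tx − Ty‖² ≤ ‖((1−t)x + tTx) − ((1−t)y + tTy)‖² − 2(1−t)·φ(‖Tx − Ty‖). -/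
/-!
The four-point identity `‖x - v‖² + ‖y - u‖² - ‖x - u‖² - ‖y - v‖² = 2⟪x - y, u - v⟫` turns (P₂)
into `‖Tx - Ty‖² + φ(‖Tx - Ty‖) ≤ ⟪x - y, Tx - Ty⟫`. Writing `b = Tx - Ty`, the difference of the
two convex combinations is `b + (1 - t)(x - y - b)`; expanding its square, the cross term is
at least `2(1 - t)φ(‖b‖)` by the estimate above, and the quadratic term is nonnegative.
-/

open scoped RealInnerProductSpace

section

variable {H : Type*} [NormedAddCommGroup H] [InnerProductSpace ℝ H]

theorem norm_sub_sq_cross_sub_norm_sub_sq_diag (x y u v : H) :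
    ‖x - v‖ ^ 2 + ‖y - u‖ ^ 2 - ‖x - u‖ ^ 2 - ‖y - v‖ ^ 2 = 2 * ⟪x - y, u - v⟫ := by
  have hxv : x - v = (x - u) + (u - v) := by abel
  have hyu : y - u = (y - v) - (u - v) := by abel
  have hdiff : (x - u) - (y - v) = (x - y) - (u - v) := by abel
  rw [hxv, hyu, norm_add_sq_real (x - u), norm_sub_sq_real (y - v)]
  have key : ⟪x - u, u - v⟫ - ⟪y - v, u - v⟫ = ⟪x - y, u - v⟫ - ‖u - v‖ ^ 2 := by
    rw [← inner_sub_left, hdiff, inner_sub_left, real_inner_self_eq_norm_sq]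
  linarith

theorem norm_sq_add_le_inner_of_P2 {x y u v : H} {c : ℝ}
    (h : 2 * ‖u - v‖ ^ 2 ≤ ‖x - v‖ ^ 2 + ‖y - u‖ ^ 2 - ‖x - u‖ ^ 2 - ‖y - v‖ ^ 2 - 2 * c) :
    ‖u - v‖ ^ 2 + c ≤ ⟪x - y, u - v⟫ := by
  rw [norm_sub_sq_cross_sub_norm_sub_sq_diag] at h
  linarith

theorem norm_sq_le_norm_add_smul_sub_sq {d b : H} {c s : ℝ} (hs : 0 ≤ s)
    (h : ‖b‖ ^ 2 + c ≤ ⟪d, b⟫) :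
    ‖b‖ ^ 2 ≤ ‖b + s • (d - b)‖ ^ 2 - 2 * s * c := by
  have hc : c ≤ ⟪b, d - b⟫ := by
    rw [inner_sub_right, real_inner_self_eq_norm_sq, real_inner_comm]
    linarith
  have hsq : 0 ≤ s ^ 2 * ‖d - b‖ ^ 2 := by positivity
  calc ‖b‖ ^ 2 ≤ ‖b‖ ^ 2 + 2 * s * (⟪b, d - b⟫ - c) + s ^ 2 * ‖d - b‖ ^ 2 := by
        nlinarith [mul_nonneg hs (sub_nonneg.2 hc)]
    _ = ‖b + s • (d - b)‖ ^ 2 - 2 * s * c := by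
        rw [norm_add_sq_real, real_inner_smul_right, norm_smul, Real.norm_of_nonneg hs]
        ring

theorem convexComb_sub_convexComb (x y u v : H) (t : ℝ) :
    ((1 - t) • x + t • u) - ((1 - t) • y + t • v) = (u - v) + (1 - t) • ((x - y) - (u - v)) := by
  module

end

theorem stmt19_general
    {H : Type*} [NormedAddCommGroup H] [InnerProductSpace ℝ H]
    (C : Set H)
    (φ : ℝ → ℝ)
    (T : H → H) (hTC : Set.MapsTo T C C)
    (hUP2 : ∀ x ∈ C, ∀ y ∈ C, 2 * ‖T x - T y‖ ^ 2 ≤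
      ‖x - T y‖ ^ 2 + ‖y - T x‖ ^ 2 - ‖x - T x‖ ^ 2 - ‖y - T y‖ ^ 2
        - 2 * φ ‖T x - T y‖) :
    Set.MapsTo T C C ∧
    ∀ x ∈ C, ∀ y ∈ C, ∀ t ∈ Set.Icc (0 : ℝ) 1,
      ‖T x - T y‖ ^ 2 ≤
        ‖((1 - t) • x + t • T x) - ((1 - t) • y + t • T y)‖ ^ 2
          - 2 * (1 - t) * φ ‖T x - T y‖ := by
  refine ⟨hTC, fun x hx y hy t ht => ?_⟩
  rw [convexComb_sub_convexComb]
  exact norm_sq_le_norm_add_smul_sub_sq (sub_nonneg.2 ht.2)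
    (norm_sq_add_le_inner_of_P2 (hUP2 x hx y hy))

theorem stmt19
    {H : Type*} [NormedAddCommGroup H] [InnerProductSpace ℝ H]
    (C : Set H) (hCne : C.Nonempty)
    (φ : ℝ → ℝ) (hφmono : ∀ s t : ℝ, 0 ≤ s → s ≤ t → φ s ≤ φ t)
    (hφnonneg : ∀ t : ℝ, 0 ≤ t → 0 ≤ φ t)
    (hφzero : ∀ t : ℝ, 0 ≤ t → (φ t = 0 ↔ t = 0))
    (T : H → H) (hTC : Set.MapsTo T C C)
    (hUP2 : ∀ x ∈ C, ∀ y ∈ C, 2 * ‖T x - T y‖ ^ 2 ≤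
      ‖x - T y‖ ^ 2 + ‖y - T x‖ ^ 2 - ‖x - T x‖ ^ 2 - ‖y - T y‖ ^ 2
        - 2 * φ ‖T x - T y‖) :
    Set.MapsTo T C C ∧
    ∀ x ∈ C, ∀ y ∈ C, ∀ t ∈ Set.Icc (0 : ℝ) 1,
      ‖T x - T y‖ ^ 2 ≤
        ‖((1 - t) • x + t • T x) - ((1 - t) • y + t • T y)‖ ^ 2
          - 2 * (1 - t) * φ ‖T x - T y‖ :=
  stmt19_general C φ T hTC hUP2
end
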